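/- arXiv:2405.05067 — 4 statements merged into one kernel-verified Lean document; each statement's English description precedes it below -/
import Mathlib

section
/- If E is a compact subset of the complex plane containing infinitely many points, then for each positive integer n there exists a unique monic polynomial of degree n minimizing the supremum norm on E among all monic polynomials of degree n. -/
open Polynomial

noncomputable def supNorm (E : Set ℂ) (P : Polynomial ℂ) : ℝ :=
  sSup ((fun z => ‖P.eval z‖) '' E)

namespace ChebAux

lemma continuous_absEval (P : Polynomial ℂ) : Continuous fun z => ‖P.eval z‖ :=
  continuous_norm.comp (P.continuous)

lemma bddAbove_image {E : Set ℂ} (hE : IsCompact E) (P : Polynomial ℂ) :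
    BddAbove ((fun z => ‖P.eval z‖) '' E) :=
  (hE.image (continuous_absEval P)).bddAbove

lemma le_supNorm {E : Set ℂ} (hE : IsCompact E) (P : Polynomial ℂ) {z : ℂ} (hz : z ∈ E) :
    ‖P.eval z‖ ≤ supNorm E P :=
  le_csSup (bddAbove_image hE P) ⟨z, hz, rfl⟩

lemma supNorm_le {E : Set ℂ} (hne : E.Nonempty) {P : Polynomial ℂ} {c : ℝ}
    (h : ∀ z ∈ E, ‖P.eval z‖ ≤ c) : supNorm E P ≤ c :=
  csSup_le (hne.image _) (by rintro x ⟨z, hz, rfl⟩; exact h z hz)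

lemma exists_abs_eq_supNorm {E : Set ℂ} (hE : IsCompact E) (hne : E.Nonempty) (P : Polynomial ℂ) :
    ∃ z ∈ E, ‖P.eval z‖ = supNorm E P := by
  obtain ⟨z, hz, hmax⟩ := hE.exists_isMaxOn hne (continuous_absEval P).continuousOn
  exact ⟨z, hz, le_antisymm (le_supNorm hE P hz) (supNorm_le hne fun w hw => hmax hw)⟩

lemma supNorm_pos {E : Set ℂ} (hE : IsCompact E) (hinf : E.Infinite) {P : Polynomial ℂ}
    (hP : P ≠ 0) : 0 < supNorm E P := by
  have : ∃ z ∈ E, P.eval z ≠ 0 := by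
    by_contra h
    push_neg at h
    exact hinf ((Polynomial.finite_setOf_isRoot hP).subset fun z hz => h z hz)
  obtain ⟨z, hz, hz0⟩ := this
  exact lt_of_lt_of_le (by simpa using hz0) (le_supNorm hE P hz)

/-- Evaluation as a linear map into continuous functions on `E`. -/
noncomputable def evalL (E : Set ℂ) : Polynomial ℂ →ₗ[ℂ] C(E, ℂ) where
  toFun P := ⟨fun z => P.eval z, P.continuous.comp continuous_subtype_val⟩
  map_add' P Q := by ext z; simp
  map_smul' c P := by ext z; simp

lemma supNorm_eq_norm (E : Set ℂ) [CompactSpace E] [Nonempty E] (P : Polynomial ℂ) :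
    supNorm E P = ‖evalL E P‖ := by
  rw [ContinuousMap.norm_eq_iSup_norm, _root_.supNorm, sSup_image']
  exact iSup_congr fun z => rfl

/-- Existence of a norm minimizer over a coset of a finite-dimensional subspace. -/
lemma exists_min_norm {V : Type*} [NormedAddCommGroup V] [NormedSpace ℂ V]
    (χ : V) (W : Submodule ℂ V) [FiniteDimensional ℂ W] :
    ∃ w ∈ W, ∀ v ∈ W, ‖χ + w‖ ≤ ‖χ + v‖ := by
  haveI : ProperSpace W := FiniteDimensional.proper ℂ W
  have hcont : Continuous fun w : W => ‖χ + (w : V)‖ :=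
    (continuous_const.add continuous_subtype_val).norm
  have hK : IsCompact (Metric.closedBall (0 : W) (2 * ‖χ‖)) := isCompact_closedBall _ _
  have h0 : (0 : W) ∈ Metric.closedBall (0 : W) (2 * ‖χ‖) := by
    simp [Metric.mem_closedBall]
  obtain ⟨w0, hw0K, hw0min⟩ := hK.exists_isMinOn ⟨0, h0⟩ hcont.continuousOn
  refine ⟨w0, w0.2, fun v hv => ?_⟩
  by_cases hvb : (⟨v, hv⟩ : W) ∈ Metric.closedBall (0 : W) (2 * ‖χ‖)
  · exact hw0min hvb
  · have h1 : ‖χ + (w0 : V)‖ ≤ ‖χ + (0 : V)‖ := hw0min h0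
    simp only [add_zero] at h1
    have h2 : 2 * ‖χ‖ < ‖v‖ := by
      simpa [Metric.mem_closedBall] using hvb
    have h3 : ‖v‖ - ‖χ‖ ≤ ‖χ + v‖ := by
      have := norm_sub_norm_le v (-χ)
      simpa [sub_neg_eq_add, add_comm] using this
    linarith

end ChebAux

namespace ChebAux

lemma eq_of_abs_add_eq {a b : ℂ} {m : ℝ} (hm : 0 < m) (ha : ‖a‖ ≤ m)
    (hb : ‖b‖ ≤ m) (hab : ‖a + b‖ = 2 * m) : a = b := by
  have htri : ‖a + b‖ ≤ ‖a‖ + ‖b‖ := norm_add_le a b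
  have ha' : ‖a‖ = m := by linarith
  have hb' : ‖b‖ = m := by linarith
  refine eq_of_norm_eq_of_norm_add_eq ?_ ?_
  · rw [ha', hb']
  · rw [ha', hb', hab]; ring

lemma monic_aux {Q : Polynomial ℂ} {n : ℕ} (hQ : Q.degree < (n : ℕ)) :
    (X ^ n + Q).Monic ∧ (X ^ n + Q).natDegree = n := by
  have hd : Q.degree < (X ^ n : Polynomial ℂ).degree := by rwa [degree_X_pow]
  refine ⟨(monic_X_pow n).add_of_left hd, ?_⟩
  have hdeg : (X ^ n + Q).degree = (n : WithBot ℕ) := by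
    rw [degree_add_eq_left_of_degree_lt hd, degree_X_pow]
  exact natDegree_eq_of_degree_eq_some hdeg

lemma sub_X_pow_mem {P : Polynomial ℂ} {n : ℕ} (hP : P.Monic) (hPd : P.natDegree = n) :
    P - X ^ n ∈ degreeLT ℂ n := by
  rw [mem_degreeLT]
  have h1 : P.degree = (n : ℕ) := by rw [degree_eq_natDegree hP.ne_zero, hPd]
  have h2 := degree_sub_lt (p := P) (q := X ^ n) (by rw [h1, degree_X_pow]) hP.ne_zero
    (by rw [hP.leadingCoeff, leadingCoeff_X_pow])
  rwa [h1] at h2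

end ChebAux

open ChebAux

theorem chebyshev_exists_unique (E : Set ℂ) (hE : IsCompact E) (hinf : E.Infinite)
    (n : ℕ) (hn : 0 < n) :
    ∃! T : Polynomial ℂ, T.Monic ∧ T.natDegree = n ∧
      ∀ P : Polynomial ℂ, P.Monic → P.natDegree = n → supNorm E T ≤ supNorm E P := by
  haveI : CompactSpace E := isCompact_iff_compactSpace.mp hE
  have hne : E.Nonempty := hinf.nonempty
  haveI : Nonempty E := hne.to_subtype
  haveI hfd : FiniteDimensional ℂ (degreeLT ℂ n) :=
    LinearEquiv.finiteDimensional (degreeLTEquiv ℂ n).symm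
  haveI : FiniteDimensional ℂ ((degreeLT ℂ n).map (evalL E)) := Module.Finite.map _ _
  obtain ⟨w, hwW, hwmin⟩ := exists_min_norm (evalL E (X ^ n)) ((degreeLT ℂ n).map (evalL E))
  obtain ⟨Q, hQmem, hQw⟩ := hwW
  have hQdeg : Q.degree < (n : ℕ) := mem_degreeLT.mp hQmem
  obtain ⟨hTm, hTd⟩ := monic_aux hQdeg
  set T := X ^ n + Q with hT
  have key : ∀ P : Polynomial ℂ, P.Monic → P.natDegree = n → supNorm E T ≤ supNorm E P := by
    intro P hP hPd
    have h2 : X ^ n + (P - X ^ n) = P := by ring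
    have h3 := hwmin (evalL E (P - X ^ n)) ⟨P - X ^ n, sub_X_pow_mem hP hPd, rfl⟩
    rw [← hQw, ← map_add, ← map_add, h2, ← supNorm_eq_norm, ← supNorm_eq_norm] at h3
    exact h3
  refine ⟨T, ⟨hTm, hTd, key⟩, ?_⟩
  rintro T' ⟨hT'm, hT'd, hT'min⟩
  by_contra hne'
  set D := T' - T with hD
  have hD0 : D ≠ 0 := sub_ne_zero.mpr hne'
  have hDdeg : D.degree < (n : ℕ) := by
    have h1 : T'.degree = (n : ℕ) := by rw [degree_eq_natDegree hT'm.ne_zero, hT'd]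
    have h2 := degree_sub_lt (p := T') (q := T)
      (by rw [h1, degree_eq_natDegree hTm.ne_zero, hTd]) hT'm.ne_zero
      (by rw [hT'm.leadingCoeff, hTm.leadingCoeff])
    rwa [h1] at h2
  set m := supNorm E T with hmdef
  have hmpos : 0 < m := supNorm_pos hE hinf hTm.ne_zero
  have hm' : supNorm E T' = m := le_antisymm (hT'min T hTm hTd) (key T' hT'm hT'd)
  -- the midpoint polynomial
  set R := (2⁻¹ : ℂ) • ((T - X ^ n) + (T' - X ^ n)) with hR
  set Q2 := (2⁻¹ : ℂ) • (T + T') with hQ2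
  have hQ2eq : Q2 = X ^ n + R := by rw [hQ2, hR]; module
  have hRdeg : R.degree < (n : ℕ) := by
    refine lt_of_le_of_lt (degree_smul_le _ _) (lt_of_le_of_lt (degree_add_le _ _) ?_)
    exact max_lt (mem_degreeLT.mp (sub_X_pow_mem hTm hTd))
      (mem_degreeLT.mp (sub_X_pow_mem hT'm hT'd))
  have hmon := monic_aux hRdeg
  rw [← hQ2eq] at hmon
  obtain ⟨hQ2m, hQ2d⟩ := hmon
  have heval : ∀ z : ℂ, Q2.eval z = 2⁻¹ * (T.eval z + T'.eval z) := by
    intro z; rw [hQ2]; simp [eval_smul, smul_eq_mul, mul_add]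
  have habs : ∀ z : ℂ, ‖Q2.eval z‖ = 2⁻¹ * ‖T.eval z + T'.eval z‖ := by
    intro z; rw [heval z, norm_mul]; norm_num
  have hQ2le : ∀ z ∈ E, ‖Q2.eval z‖ ≤ m := by
    intro z hz
    have h1 := norm_add_le (T.eval z) (T'.eval z)
    have h2 := le_supNorm hE T hz
    have h3 := le_supNorm hE T' hz
    rw [hm'] at h3
    rw [habs z]
    rw [← hmdef] at h2
    linarith
  have hQ2sup : supNorm E Q2 = m := le_antisymm (supNorm_le hne hQ2le) (key Q2 hQ2m hQ2d)
  -- the extremal set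
  set A := {z | z ∈ E ∧ ‖Q2.eval z‖ = m} with hA
  have hAeq : ∀ z ∈ A, T.eval z = T'.eval z := by
    rintro z ⟨hzE, hzm⟩
    have h3 := le_supNorm hE T' hzE; rw [hm'] at h3
    have h2 := le_supNorm hE T hzE; rw [← hmdef] at h2
    refine eq_of_abs_add_eq hmpos h2 h3 ?_
    have := habs z
    rw [hzm] at this
    linarith
  have hAroot : A ⊆ {z | D.IsRoot z} := by
    intro z hz
    simp only [hD, Set.mem_setOf_eq, IsRoot, eval_sub, sub_eq_zero]
    exact (hAeq z hz).symm
  have hAfin : A.Finite := (Polynomial.finite_setOf_isRoot hD0).subset hAroot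
  set s := hAfin.toFinset with hs
  have hscard : s.card ≤ n := by
    have hsub : s ⊆ D.roots.toFinset := by
      intro z hz
      rw [Multiset.mem_toFinset, mem_roots hD0]
      exact hAroot (hAfin.mem_toFinset.mp hz)
    calc s.card ≤ D.roots.toFinset.card := Finset.card_le_card hsub
      _ ≤ Multiset.card D.roots := Multiset.toFinset_card_le _
      _ ≤ D.natDegree := card_roots' D
      _ ≤ n := ((natDegree_lt_iff_degree_lt hD0).mpr hDdeg).le
  set p := Lagrange.interpolate s id (fun z => Q2.eval z) with hp
  have hpdeg : p.degree < (n : ℕ) :=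
    lt_of_lt_of_le (Lagrange.degree_interpolate_lt _ (Set.injOn_id _)) (by exact_mod_cast hscard)
  have hpval : ∀ z ∈ A, p.eval z = Q2.eval z := by
    intro z hz
    have := Lagrange.eval_interpolate_at_node (fun w => Q2.eval w) (Set.injOn_id _)
      (hAfin.mem_toFinset.mpr hz)
    simpa [hp] using this
  -- the set where |Q2 - p| is big
  set K := E ∩ {z | m / 2 ≤ ‖Q2.eval z - p.eval z‖} with hK
  have hKcompact : IsCompact K := hE.inter_right (isClosed_le continuous_const
    (continuous_norm.comp ((Q2.continuous).sub (p.continuous))))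
  have hm'ex : ∃ m' : ℝ, m' < m ∧ ∀ z ∈ K, ‖Q2.eval z‖ ≤ m' := by
    rcases K.eq_empty_or_nonempty with hKe | hKne
    · exact ⟨0, hmpos, by simp [hKe]⟩
    · obtain ⟨z1, hz1K, hz1max⟩ := hKcompact.exists_isMaxOn hKne (continuous_absEval Q2).continuousOn
      refine ⟨‖Q2.eval z1‖, ?_, fun z hz => hz1max hz⟩
      have hle : ‖Q2.eval z1‖ ≤ m := hQ2le z1 hz1K.1
      rcases lt_or_eq_of_le hle with h | h
      · exact h
      · exfalso
        have hzA : z1 ∈ A := ⟨hz1K.1, h⟩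
        have := hz1K.2
        rw [Set.mem_setOf_eq, hpval z1 hzA, sub_self] at this
        simp at this
        linarith
  obtain ⟨m', hm'lt, hm'bd⟩ := hm'ex
  -- bound on p
  obtain ⟨zw, hzw⟩ := id hne
  have hCp0 : 0 < supNorm E p + 1 := by
    have := le_trans (norm_nonneg _) (le_supNorm hE p hzw)
    linarith
  set Cp := supNorm E p + 1 with hCp
  have hCple : ∀ z ∈ E, ‖p.eval z‖ ≤ Cp := fun z hz => by
    have := le_supNorm hE p hz; rw [hCp]; linarith
  -- choose epsilon
  set ε := min 2⁻¹ ((m - m') / (2 * Cp)) with hε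
  have hε0 : 0 < ε := lt_min (by norm_num) (div_pos (by linarith) (by positivity))
  have hε1 : ε ≤ 2⁻¹ := min_le_left _ _
  have hεC : ε * Cp ≤ (m - m') / 2 := by
    calc ε * Cp ≤ ((m - m') / (2 * Cp)) * Cp :=
          mul_le_mul_of_nonneg_right (min_le_right _ _) hCp0.le
      _ = (m - m') / 2 := by field_simp
  -- the competitor
  set Pe := Q2 - (ε : ℂ) • p with hPe
  have hPeeq : Pe = X ^ n + (R - (ε : ℂ) • p) := by rw [hPe, hQ2eq]; ring
  have hPedeg : (R - (ε : ℂ) • p).degree < (n : ℕ) := by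
    refine lt_of_le_of_lt (degree_sub_le _ _) (max_lt hRdeg ?_)
    exact lt_of_le_of_lt (degree_smul_le _ _) hpdeg
  have hmon2 := monic_aux hPedeg
  rw [← hPeeq] at hmon2
  obtain ⟨hPem, hPed⟩ := hmon2
  -- the pointwise bound
  have hbound : ∀ z ∈ E, ‖Pe.eval z‖ ≤ max (m' + (m - m') / 2) (m - ε * (m / 2)) := by
    intro z hz
    have hev : Pe.eval z = Q2.eval z - (ε : ℂ) * p.eval z := by
      rw [hPe]; simp [eval_smul, smul_eq_mul]
    by_cases hzK : m / 2 ≤ ‖Q2.eval z - p.eval z‖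
    · refine le_max_of_le_left ?_
      have hzK' : z ∈ K := ⟨hz, hzK⟩
      have h1 : ‖Pe.eval z‖ ≤
          ‖Q2.eval z‖ + ε * ‖p.eval z‖ := by
        rw [hev]
        calc ‖Q2.eval z - (ε : ℂ) * p.eval z‖
            ≤ ‖Q2.eval z‖ + ‖(ε : ℂ) * p.eval z‖ :=
              by simpa using norm_sub_le (Q2.eval z) ((ε : ℂ) * p.eval z)
          _ = ‖Q2.eval z‖ + ε * ‖p.eval z‖ := by
              rw [norm_mul, Complex.norm_real, Real.norm_eq_abs, abs_of_pos hε0]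
      have h2 := hm'bd z hzK'
      have h3 : ε * ‖p.eval z‖ ≤ ε * Cp :=
        mul_le_mul_of_nonneg_left (hCple z hz) hε0.le
      calc ‖Pe.eval z‖
          ≤ ‖Q2.eval z‖ + ε * ‖p.eval z‖ := h1
        _ ≤ m' + (m - m') / 2 := add_le_add h2 (h3.trans hεC)
    · refine le_max_of_le_right ?_
      push_neg at hzK
      have hev2 : Pe.eval z = ((1 - ε : ℝ) : ℂ) * Q2.eval z + (ε : ℂ) * (Q2.eval z - p.eval z) := by
        rw [hev]; push_cast; ring
      have h1 : ‖Pe.eval z‖ ≤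
          (1 - ε) * ‖Q2.eval z‖ + ε * ‖Q2.eval z - p.eval z‖ := by
        rw [hev2]
        calc ‖_‖ ≤ ‖((1 - ε : ℝ) : ℂ) * Q2.eval z‖
              + ‖(ε : ℂ) * (Q2.eval z - p.eval z)‖ := norm_add_le _ _
          _ = (1 - ε) * ‖Q2.eval z‖ + ε * ‖Q2.eval z - p.eval z‖ := by
              rw [norm_mul, norm_mul, Complex.norm_real, Complex.norm_real, Real.norm_eq_abs, Real.norm_eq_abs,
                abs_of_pos hε0, abs_of_pos (by linarith : (0:ℝ) < 1 - ε)]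
      have h2 := hQ2le z hz
      have h3 : ε * ‖Q2.eval z - p.eval z‖ ≤ ε * (m / 2) :=
        mul_le_mul_of_nonneg_left hzK.le hε0.le
      nlinarith [norm_nonneg (Q2.eval z)]
  have hfinal : supNorm E Pe < m := by
    refine lt_of_le_of_lt (supNorm_le hne hbound) (max_lt (by linarith) ?_)
    nlinarith
  exact absurd (key Pe hPem hPed) (not_le.mpr hfinal)
end

section
/- Let E be a compact infinite subset of ℂ that is invariant under multiplication by e^{2πi/m} for some m ∈ ℕ. Then for n ∈ ℕ and l ∈ {0,1,…,m−1}, the Chebyshev polynomial of degree nm+l for E has the form z^l · Q(z^m) for some monic polynomial Q of degree n; equivalently, the coefficient of z^j in T_{nm+l}^E vanishes whenever j − l is not a multiple of m. -/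
open Polynomial Complex

/-!
Let `ω = exp (2πi/m)`. For a monic `T` of degree `d`, the rotated polynomial
`T.scaleRoots ω`, i.e. `ω ^ d * T (ω⁻¹ z)`, is again monic of degree `d`, and since `E` is
invariant under `z ↦ ω z` and `‖ω‖ = 1` it has the same sup norm on `E`. Uniqueness of the
Chebyshev polynomial forces `T.scaleRoots ω = T`, i.e. `T.coeff j * ω ^ (d - j) = T.coeff j`
for all `j`, so only the coefficients with `j ≡ d ≡ l (mod m)` survive, which is exactly the
shape `z ^ l * Q (z ^ m)`.
-/

namespace Polynomial

section CommSemiring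

variable {R : Type*} [CommSemiring R]

theorem expand_contract_of_coeff_eq_zero {m : ℕ} (hm : m ≠ 0) {f : R[X]}
    (hf : ∀ j, ¬m ∣ j → f.coeff j = 0) : expand R m (contract m f) = f := by
  ext j
  rw [coeff_expand (Nat.pos_of_ne_zero hm), coeff_contract hm]
  split_ifs with hj
  · rw [Nat.div_mul_cancel hj]
  · exact (hf j hj).symm

theorem exists_eq_X_pow_mul_expand {m l : ℕ} (hl : l < m) {f : R[X]}
    (hf : ∀ j, j % m ≠ l → f.coeff j = 0) : ∃ g : R[X], f = X ^ l * expand R m g := by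
  obtain ⟨r, rfl⟩ : X ^ l ∣ f :=
    X_pow_dvd_iff.2 fun j hj => hf j (by rw [Nat.mod_eq_of_lt (hj.trans hl)]; exact hj.ne)
  refine ⟨contract m r, ?_⟩
  rw [expand_contract_of_coeff_eq_zero (Nat.zero_lt_of_lt hl).ne']
  intro j hj
  rw [← coeff_X_pow_mul r l j]
  refine hf _ fun hjl => hj (Nat.modEq_zero_iff_dvd.1 (Nat.ModEq.add_right_cancel' l ?_))
  rwa [zero_add, Nat.ModEq, Nat.mod_eq_of_lt hl]

theorem Monic.exists_monic_eq_X_pow_mul_comp [Nontrivial R] {m n l : ℕ} (hl : l < m)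
    {f : R[X]} (hmon : f.Monic) (hdeg : f.natDegree = n * m + l)
    (hf : ∀ j, j % m ≠ l → f.coeff j = 0) :
    ∃ g : R[X], g.Monic ∧ g.natDegree = n ∧ f = X ^ l * g.comp (X ^ m) := by
  have hm : 0 < m := Nat.zero_lt_of_lt hl
  obtain ⟨g, rfl⟩ := exists_eq_X_pow_mul_expand hl hf
  have hg : g.Monic := (monic_expand_iff hm).1 ((monic_X_pow l).of_mul_monic_left hmon)
  refine ⟨g, hg, ?_, by rw [expand_eq_comp_X_pow]⟩
  rw [(monic_X_pow l).natDegree_mul (hg.expand hm), natDegree_X_pow, natDegree_expand] at hdeg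
  exact Nat.eq_of_mul_eq_mul_right hm (by omega)

end CommSemiring

theorem coeff_eq_zero_of_scaleRoots_eq_self {R : Type*} [CommRing R] [IsDomain R] {p : R[X]}
    {ω : R} {m : ℕ} (hω : IsPrimitiveRoot ω m) (hp : p.scaleRoots ω = p) {j : ℕ}
    (hj : ¬j ≡ p.natDegree [MOD m]) : p.coeff j = 0 := by
  by_cases hjd : p.natDegree < j
  · exact coeff_eq_zero_of_natDegree_lt hjd
  by_contra hc
  have hpow : ω ^ (p.natDegree - j) = 1 := by
    refine mul_left_cancel₀ hc ?_
    rw [mul_one, ← coeff_scaleRoots, hp]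
  exact hj ((Nat.modEq_iff_dvd' (not_lt.1 hjd)).2 ((hω.pow_eq_one_iff_dvd _).1 hpow))

end Polynomial

theorem supNorm_scaleRoots {E : Set ℂ} {ω : ℂ} (hω : ‖ω‖ = 1)
    (hE : (fun z => ω * z) '' E = E) (p : ℂ[X]) : supNorm E (p.scaleRoots ω) = supNorm E p := by
  unfold _root_.supNorm
  conv_lhs => rw [← hE, Set.image_image]
  congr 1
  refine Set.image_congr fun z _ => ?_
  rw [scaleRoots_eval_mul, norm_mul, norm_pow, hω, one_pow, one_mul]

theorem chebyshev_rotational_symmetry_general (E : Set ℂ)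
    (m : ℕ)
    (hsym : (fun z => Complex.exp (2 * Real.pi * I / m) * z) '' E = E)
    (n l : ℕ) (hl : l < m) (T : Polynomial ℂ)
    (hT : T.Monic ∧ T.natDegree = n * m + l ∧
      ∀ P : Polynomial ℂ, P.Monic → P.natDegree = n * m + l → supNorm E T ≤ supNorm E P)
    (hUniq : ∀ P : Polynomial ℂ, P.Monic → P.natDegree = n * m + l →
      (∀ Q : Polynomial ℂ, Q.Monic → Q.natDegree = n * m + l →
        supNorm E P ≤ supNorm E Q) → P = T) :
    (∃ Q : Polynomial ℂ, Q.Monic ∧ Q.natDegree = n ∧ T = X ^ l * Q.comp (X ^ m)) ∧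
    ∀ j : ℕ, j % m ≠ l → T.coeff j = 0 := by
  obtain ⟨hTmon, hTdeg, hTmin⟩ := hT
  have hm : m ≠ 0 := (Nat.zero_lt_of_lt hl).ne'
  have hω := Complex.isPrimitiveRoot_exp m hm
  have hfix : T.scaleRoots (exp (2 * Real.pi * I / m)) = T :=
    hUniq _ ((monic_scaleRoots_iff _).2 hTmon) (by rw [natDegree_scaleRoots, hTdeg])
      fun Q hQ hQdeg =>
        (supNorm_scaleRoots (hω.norm'_eq_one hm) hsym T).trans_le (hTmin Q hQ hQdeg)
  have hcoeff : ∀ j, j % m ≠ l → T.coeff j = 0 := fun j hj =>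
    coeff_eq_zero_of_scaleRoots_eq_self hω hfix <| by
      rwa [Nat.ModEq, hTdeg, Nat.mul_add_mod_self_right, Nat.mod_eq_of_lt hl]
  exact ⟨hTmon.exists_monic_eq_X_pow_mul_comp hl hTdeg hcoeff, hcoeff⟩

theorem chebyshev_rotational_symmetry (E : Set ℂ) (hE : IsCompact E) (hinf : E.Infinite)
    (m : ℕ) (hm : 0 < m)
    (hsym : (fun z => Complex.exp (2 * Real.pi * I / m) * z) '' E = E)
    (n l : ℕ) (hl : l < m) (T : Polynomial ℂ)
    (hT : T.Monic ∧ T.natDegree = n * m + l ∧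
      ∀ P : Polynomial ℂ, P.Monic → P.natDegree = n * m + l → supNorm E T ≤ supNorm E P)
    (hUniq : ∀ P : Polynomial ℂ, P.Monic → P.natDegree = n * m + l →
      (∀ Q : Polynomial ℂ, Q.Monic → Q.natDegree = n * m + l →
        supNorm E P ≤ supNorm E Q) → P = T) :
    (∃ Q : Polynomial ℂ, Q.Monic ∧ Q.natDegree = n ∧ T = X ^ l * Q.comp (X ^ m)) ∧
    ∀ j : ℕ, j % m ≠ l → T.coeff j = 0 :=
  chebyshev_rotational_symmetry_general E m hsym n l hl T hT hUniq
end

section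
/- Let E be a compact infinite set invariant under multiplication by e^{2πi/m}. Then for l ∈ {0,1,…,m−1}, the Chebyshev polynomial of degree l for E is z ↦ z^l. -/
open Polynomial Complex

lemma coeff_comp_C_mul_X (p : ℂ[X]) (a : ℂ) (k : ℕ) :
    (p.comp (C a * X)).coeff k = p.coeff k * a ^ k := by
  induction p using Polynomial.induction_on' with
  | add p q hp hq => simp [add_comp, hp, hq, add_mul]
  | monomial n b =>
      rw [monomial_comp, mul_pow, ← C_pow, ← mul_assoc, ← C_mul]
      simp only [coeff_C_mul, coeff_monomial, coeff_X_pow]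
      by_cases h : n = k
      · simp [h]
      · simp [h]; intro hk; exact absurd hk.symm h

theorem chebyshev_low_degree_is_monomial (E : Set ℂ) (hE : IsCompact E) (hinf : E.Infinite)
    (m : ℕ) (hm : 0 < m)
    (hsym : (fun z => Complex.exp (2 * Real.pi * I / m) * z) '' E = E)
    (l : ℕ) (hl : l < m) (T : Polynomial ℂ)
    (hT : T.Monic ∧ T.natDegree = l ∧
      ∀ P : Polynomial ℂ, P.Monic → P.natDegree = l → supNorm E T ≤ supNorm E P)
    (hUniq : ∀ P : Polynomial ℂ, P.Monic → P.natDegree = l →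
      (∀ Q : Polynomial ℂ, Q.Monic → Q.natDegree = l → supNorm E P ≤ supNorm E Q) → P = T) :
    T = X ^ l := by
  obtain ⟨hmon, hdeg, hmin⟩ := hT
  set ω : ℂ := Complex.exp (2 * Real.pi * I / m) with hωdef
  have hprim : IsPrimitiveRoot ω m := Complex.isPrimitiveRoot_exp m hm.ne'
  have hω0 : ω ≠ 0 := Complex.exp_ne_zero _
  have hωl0 : ω ^ l ≠ 0 := pow_ne_zero _ hω0
  have hTl : T.coeff l = 1 := by rw [← hdeg]; exact hmon.coeff_natDegree
  have habsω : ‖ω‖ = 1 := by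
    have h1 : ‖ω‖ ^ m = 1 := by
      rw [← norm_pow, hprim.pow_eq_one, norm_one]
    rcases pow_eq_one_iff_cases.mp h1 with h | h | h
    · omega
    · exact h
    · nlinarith [norm_nonneg ω]
  set P : Polynomial ℂ := C ((ω ^ l)⁻¹) * T.comp (C ω * X) with hPdef
  have hPcoeff : ∀ k, P.coeff k = (ω ^ l)⁻¹ * (T.coeff k * ω ^ k) := by
    intro k
    rw [hPdef, coeff_C_mul, coeff_comp_C_mul_X]
  have hTcomp_deg : (T.comp (C ω * X)).natDegree = l := by
    rw [natDegree_comp, natDegree_C_mul_X _ hω0, hdeg, mul_one]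
  have hPdeg : P.natDegree = l := by
    rw [hPdef, natDegree_C_mul (inv_ne_zero hωl0), hTcomp_deg]
  have hPmonic : P.Monic := by
    rw [Monic, Polynomial.leadingCoeff, hPdeg, hPcoeff l, hTl, one_mul,
      inv_mul_cancel₀ hωl0]
  have hPeval : ∀ z : ℂ, ‖P.eval z‖ = ‖T.eval (ω * z)‖ := by
    intro z
    rw [hPdef]
    simp only [eval_mul, eval_C, eval_comp, eval_mul, eval_C, eval_X, norm_mul, norm_inv,
      norm_pow, habsω, one_pow, inv_one, one_mul]
  have hsup : supNorm E P = supNorm E T := by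
    unfold _root_.supNorm
    congr 1
    conv_rhs => rw [← hsym]
    rw [Set.image_image]
    exact Set.image_congr fun z _ => hPeval z
  have hPT : P = T := hUniq P hPmonic hPdeg (fun Q hQ1 hQ2 => hsup ▸ hmin Q hQ1 hQ2)
  have hzero : ∀ k < l, T.coeff k = 0 := by
    intro k hk
    have hc := congrArg (fun p => Polynomial.coeff p k) hPT
    simp only [hPcoeff k] at hc
    field_simp at hc
    have hc : ω ^ k = ω ^ l ∨ T.coeff k = 0 := by
      have hc0 := congrArg (fun p => Polynomial.coeff p k) hPT
      simp only [hPcoeff k] at hc0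
      rw [inv_mul_eq_iff_eq_mul₀ hωl0] at hc0
      by_cases h0 : T.coeff k = 0
      · exact Or.inr h0
      · left; apply mul_left_cancel₀ h0; linear_combination hc0
    rcases hc with h3 | h3
    · exfalso
      have h4 : ω ^ (l - k) = 1 := by
        have h5 : ω ^ l = ω ^ k * ω ^ (l - k) := by rw [← pow_add]; congr 1; omega
        rw [← h3] at h5
        nth_rewrite 1 [← mul_one (ω ^ k)] at h5
        exact (mul_left_cancel₀ (pow_ne_zero _ hω0) h5).symm
      have h5 : m ∣ (l - k) := hprim.pow_eq_one_iff_dvd _ |>.mp h4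
      have := Nat.le_of_dvd (by omega) h5
      omega
    · exact h3
  ext k
  rw [coeff_X_pow]
  rcases lt_trichotomy k l with h | h | h
  · rw [hzero k h, if_neg (by omega)]
  · rw [if_pos h, h, hTl]
  · rw [coeff_eq_zero_of_natDegree_lt (hdeg ▸ h), if_neg (by omega)]
end

section
/- Let L^r = {z ∈ ℂ : |z² − 1| = r²} for r ≥ 1. The Chebyshev polynomial of degree 3 for L^r is T_3(z) = z(z² − c(r)) where c(r) = (4 − r⁴ + √(1 + 7r⁴ + r⁸))/5, and c(r) → 3/2 as r → ∞; in particular T_3^{L^r} converges coefficientwise to the Faber polynomial F_3(z) = z(z² − 3/2). -/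
open Polynomial Filter

/-- The coefficient `c(r)` of the degree-3 Chebyshev polynomial on the
lemniscate `{z : |z² - 1| = r²}`. -/
noncomputable def chebCoeff (r : ℝ) : ℝ :=
  (4 - r ^ 4 + Real.sqrt (1 + 7 * r ^ 4 + r ^ 8)) / 5

private lemma cheb_key_ineq (s u x : ℝ) (hs : 1 ≤ s) (hu1 : -(1/2:ℝ) ≤ u)
    (hu2 : u ≤ -(1/5:ℝ)) (hx1 : -s ≤ x) (hx2 : x ≤ s)
    (hcon : s^2 + 2*u*s^2 - 5*u^2 + 2*u = 0) :
    (1+s^2+2*x)*(u^2+s^2+2*u*x)^2 ≤ (1+s^2-2*u)*(s^2-u^2)^2 := by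
  have h12u : 0 < 1 + 2*u := by nlinarith [sq_nonneg s]
  have hE : 0 ≤ u*s^2 + 2*s^2 + 2*u*x + u - 2*u^2 := by
    nlinarith [mul_nonneg (by linarith : (0:ℝ) ≤ s - x) (by linarith : (0:ℝ) ≤ -2*u),
      mul_pos h12u h12u, mul_nonneg (by linarith : (0:ℝ) ≤ s - 1) (by linarith : (0:ℝ) ≤ s),
      mul_nonneg (mul_nonneg (by linarith : (0:ℝ) ≤ s - 1) (by linarith : (0:ℝ) ≤ s)) (by linarith : (0:ℝ) ≤ -u)]
  have hid : (1+s^2-2*u)*(s^2-u^2)^2 - (1+s^2+2*x)*(u^2+s^2+2*u*x)^2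
      = (-(4*u))*(x+u)^2*(u*s^2 + 2*s^2 + 2*u*x + u - 2*u^2) := by
    linear_combination (2*(u^2-s^2)*(x+u)) * hcon
  nlinarith [mul_nonneg (mul_nonneg (by linarith : (0:ℝ) ≤ -(4*u)) (sq_nonneg (x+u))) hE]

/-- `|z³ - αz|⁴` in terms of `x = Re (z²-1)` for `z` on the lemniscate. -/
private lemma abs_pow_four (s α : ℝ) (z : ℂ) (hz : ‖z^2 - 1‖ = s) :
    (‖z^3 - (α:ℂ)*z‖)^4
      = (1 + s^2 + 2*(z^2-1).re) * ((1-α)^2 + s^2 + 2*(1-α)*(z^2-1).re)^2 := by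
  set w : ℂ := z^2 - 1 with hw
  have hns : w.re*w.re + w.im*w.im = s^2 := by
    have : Complex.normSq w = s^2 := by
      rw [← Complex.sq_norm, hz]
    simpa [Complex.normSq_apply] using this
  have h1 : Complex.normSq (z^2) = 1 + s^2 + 2*w.re := by
    have hz2 : z^2 = 1 + w := by rw [hw]; ring
    rw [hz2]
    simp [Complex.normSq_apply, Complex.add_re, Complex.add_im]
    linarith
  have h2 : Complex.normSq (z^2 - (α:ℂ)) = (1-α)^2 + s^2 + 2*(1-α)*w.re := by
    have hz2 : z^2 - (α:ℂ) = ((1:ℝ)-α : ℝ) + w := by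
      push_cast; rw [hw]; ring
    rw [hz2]
    simp [Complex.normSq_apply, Complex.add_re, Complex.add_im]
    nlinarith [hns]
  have hfactor : z^3 - (α:ℂ)*z = z * (z^2 - (α:ℂ)) := by ring
  rw [hfactor, norm_mul]
  rw [mul_pow]
  have ha : (‖z‖)^4 = Complex.normSq (z^2) := by
    rw [← Complex.sq_norm, norm_pow]
    ring
  have hb : (‖z^2 - (α:ℂ)‖)^4 = (Complex.normSq (z^2 - (α:ℂ)))^2 := by
    rw [← Complex.sq_norm]
    ring
  rw [ha, hb, h1, h2]


private lemma cheb_lower_aux (s u b : ℝ) (hs1 : 1 ≤ s) (hu1 : -(1/2:ℝ) ≤ u)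
    (hu2 : u ≤ -(1/5:ℝ)) :
    (1+s^2-2*u)*(s^2-u^2)^2 ≤ (1+s^2-2*u)*((1+b)^2+s^2-2*(1+b)*u)^2 := by
  have h1 : (0:ℝ) ≤ 1 + s^2 - 2*u := by nlinarith
  have h2 : (0:ℝ) ≤ s^2 - u^2 := by nlinarith
  have h3 : s^2 - u^2 ≤ (1+b)^2 + s^2 - 2*(1+b)*u := by nlinarith [sq_nonneg (1+b-u)]
  exact mul_le_mul_of_nonneg_left (pow_le_pow_left₀ h2 h3 2) h1

set_option maxHeartbeats 1000000 in
private lemma cheb_min_core (s c u : ℝ) (hs1 : 1 ≤ s) (hu : u = 1 - c)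
    (hc1 : 6/5 ≤ c) (hc2 : c < 3/2)
    (hconu : s^2 + 2*u*s^2 - 5*u^2 + 2*u = 0)
    (P : Polynomial ℂ) (hPmon : P.Monic) (hPdeg : P.natDegree = 3) :
    supNorm {z : ℂ | ‖z ^ 2 - 1‖ = s} (X ^ 3 - Polynomial.C ((c:ℂ)) * X) ≤
      supNorm {z : ℂ | ‖z ^ 2 - 1‖ = s} P := by
  obtain ⟨S, hSdef⟩ : ∃ S : Set ℂ, S = {z : ℂ | ‖z ^ 2 - 1‖ = s} := ⟨_, rfl⟩
  rw [show supNorm {z : ℂ | ‖z ^ 2 - 1‖ = s} = supNorm S by rw [hSdef]]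
  have hmemS : ∀ z : ℂ, z ∈ S ↔ ‖z^2 - 1‖ = s := by
    intro z; rw [hSdef]; rfl
  have hu1 : -(1/2:ℝ) ≤ u := by rw [hu]; linarith
  have hu2 : u ≤ -(1/5:ℝ) := by rw [hu]; linarith
  have hs0 : (0:ℝ) < s := by linarith
  -- compactness of S and boundedness of images
  have hSclosed : IsClosed S := by
    rw [hSdef]
    have : Continuous fun z : ℂ => ‖z^2 - 1‖ :=
      continuous_norm.comp ((continuous_pow 2).sub continuous_const)
    exact isClosed_eq this continuous_const
  have hSbounded : Bornology.IsBounded S := by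
    apply (Metric.isBounded_closedBall (x := (0:ℂ)) (r := s + 1)).subset
    intro z hz
    have hz' : ‖z^2 - 1‖ = s := (hmemS z).mp hz
    have h1 : ‖z^2‖ ≤ s + 1 := by
      calc ‖z^2‖ = ‖(z^2 - 1) + 1‖ := by ring_nf
        _ ≤ ‖z^2 - 1‖ + ‖(1:ℂ)‖ := norm_add_le _ _
        _ = s + 1 := by rw [hz']; simp
    have h2 : (‖z‖)^2 ≤ (s+1)^2 := by
      rw [← norm_pow]
      nlinarith
    have h3 : ‖z‖ ≤ s + 1 := by
      nlinarith [norm_nonneg z]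
    simpa [Complex.dist_eq] using h3
  have hScompact : IsCompact S := Metric.isCompact_of_isClosed_isBounded hSclosed hSbounded
  have hBdd : ∀ Q : Polynomial ℂ, BddAbove ((fun z => ‖Q.eval z‖) '' S) := by
    intro Q
    exact (hScompact.image (continuous_norm.comp Q.continuous)).bddAbove
  -- the special point zstar
  have hxs2 : (c-1)^2 ≤ s^2 := by nlinarith
  obtain ⟨wstar, hwre, hwim⟩ : ∃ w : ℂ, w.re = c - 1 ∧ w.im = Real.sqrt (s^2 - (c-1)^2) :=
    ⟨Complex.mk (c-1) (Real.sqrt (s^2 - (c-1)^2)), rfl, rfl⟩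
  have hwabs : ‖wstar‖ = s := by
    have h1 : Complex.normSq wstar = s^2 := by
      rw [Complex.normSq_apply, hwre, hwim,
        Real.mul_self_sqrt (by nlinarith : (0:ℝ) ≤ s^2 - (c-1)^2)]
      ring
    have h2 : (‖wstar‖)^2 = s^2 := by rw [Complex.sq_norm]; exact h1
    nlinarith [norm_nonneg wstar]
  obtain ⟨zstar, hzstar⟩ : ∃ z : ℂ, z^2 = 1 + wstar :=
    IsAlgClosed.exists_pow_nat_eq (1 + wstar) two_pos
  have hzw : zstar^2 - 1 = wstar := by rw [hzstar]; ring
  have hzS : zstar ∈ S := by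
    rw [hmemS, hzw, hwabs]
  -- membership of symmetric points
  have hmem : ∀ z : ℂ, z ∈ S → (-z) ∈ S ∧ (starRingEnd ℂ) z ∈ S ∧ (-(starRingEnd ℂ) z) ∈ S := by
    intro z hz
    have hz' : ‖z^2 - 1‖ = s := (hmemS z).mp hz
    refine ⟨?_, ?_, ?_⟩
    · rw [hmemS, neg_pow]; simpa using hz'
    · rw [hmemS]
      rw [show ((starRingEnd ℂ) z)^2 - 1 = (starRingEnd ℂ) (z^2 - 1) by
        rw [map_sub, map_pow, map_one]]
      rw [Complex.norm_conj]; exact hz'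
    · rw [hmemS]
      rw [show (-(starRingEnd ℂ) z)^2 - 1 = (starRingEnd ℂ) (z^2 - 1) by
        rw [map_sub, map_pow, map_one]; ring]
      rw [Complex.norm_conj]; exact hz'
  obtain ⟨β, hβ⟩ : ∃ b : ℝ, b = (P.coeff 1).re := ⟨_, rfl⟩
  -- value of the competitor at zstar
  set V : ℝ := ‖zstar^3 + (β:ℂ)*zstar‖ with hV
  have hV0 : 0 ≤ V := norm_nonneg _
  -- upper bound: every point value of T3 is at most V
  have hub : ∀ z ∈ S, ‖z^3 - (c:ℂ)*z‖ ≤ V := by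
    intro z hz
    have hz' : ‖z^2 - 1‖ = s := (hmemS z).mp hz
    have h4 : (‖z^3 - (c:ℂ)*z‖)^4
        = (1 + s^2 + 2*(z^2-1).re) * ((1-c)^2 + s^2 + 2*(1-c)*(z^2-1).re)^2 :=
      abs_pow_four s c z hz'
    have hVeq : V^4 = (1 + s^2 - 2*u) * ((1+β)^2 + s^2 - 2*(1+β)*u)^2 := by
      have he : zstar^3 + (β:ℝ)*zstar = zstar^3 - ((-β : ℝ):ℂ)*zstar := by push_cast; ring
      rw [hV, he, abs_pow_four s (-β) zstar (by rw [hzw, hwabs])]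
      rw [hzw, hwre]
      have h1 : (1 : ℝ) - -β = 1 + β := by ring
      rw [h1, hu]
      ring
    have hxre : -s ≤ (z^2-1).re ∧ (z^2-1).re ≤ s := by
      have h := Complex.abs_re_le_norm (z^2-1)
      rw [hz'] at h
      exact ⟨by linarith [(abs_le.mp h).1], (abs_le.mp h).2⟩
    have hkey := cheb_key_ineq s u ((z^2-1).re) hs1 hu1 hu2 hxre.1 hxre.2 hconu
    have hM : (1 + s^2 + 2*(z^2-1).re) * ((1-c)^2 + s^2 + 2*(1-c)*(z^2-1).re)^2
        ≤ (1+s^2-2*u)*(s^2-u^2)^2 := by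
      have h1c : (1:ℝ) - c = u := by rw [hu]
      rw [h1c]
      convert hkey using 3 <;> ring
    have hlow : (1+s^2-2*u)*(s^2-u^2)^2 ≤ V^4 := by
      rw [hVeq]
      exact cheb_lower_aux s u β hs1 hu1 hu2
    have habs4 : (‖z^3 - (c:ℂ)*z‖)^4 ≤ V^4 := by
      rw [h4]; linarith
    exact le_of_pow_le_pow_left₀ (by norm_num) hV0 habs4
  -- V is at most supNorm S P
  have hevP : ∀ z : ℂ, P.eval z = z^3 + P.coeff 2 * z^2 + P.coeff 1 * z + P.coeff 0 := by
    intro z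
    have h3 : P.coeff 3 = 1 := by
      have := hPmon.coeff_natDegree
      rwa [hPdeg] at this
    rw [Polynomial.eval_eq_sum_range, hPdeg]
    simp [Finset.sum_range_succ, h3]
    ring
  have hquad : zstar^3 + (β:ℂ)*zstar
      = (P.eval zstar - P.eval (-zstar) + (starRingEnd ℂ) (P.eval ((starRingEnd ℂ) zstar))
         - (starRingEnd ℂ) (P.eval (-(starRingEnd ℂ) zstar)))/4 := by
    simp only [hevP, map_add, map_mul, map_pow, map_neg, Complex.conj_conj]
    have hac : P.coeff 1 + (starRingEnd ℂ) (P.coeff 1) = 2*(β:ℂ) := by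
      rw [hβ]; push_cast [Complex.add_conj]; ring
    rw [eq_div_iff (by norm_num : (4:ℂ) ≠ 0)]
    linear_combination (-2*zstar) * hac
  have hVle : V ≤ supNorm S P := by
    obtain ⟨h1, h2, h3⟩ := hmem zstar hzS
    have e1 : ‖P.eval zstar‖ ≤ supNorm S P :=
      le_csSup (hBdd P) ⟨zstar, hzS, rfl⟩
    have e2 : ‖P.eval (-zstar)‖ ≤ supNorm S P :=
      le_csSup (hBdd P) ⟨-zstar, h1, rfl⟩
    have e3 : ‖P.eval ((starRingEnd ℂ) zstar)‖ ≤ supNorm S P :=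
      le_csSup (hBdd P) ⟨(starRingEnd ℂ) zstar, h2, rfl⟩
    have e4 : ‖P.eval (-(starRingEnd ℂ) zstar)‖ ≤ supNorm S P :=
      le_csSup (hBdd P) ⟨-(starRingEnd ℂ) zstar, h3, rfl⟩
    have tri : V ≤ (‖P.eval zstar‖ + ‖P.eval (-zstar)‖
        + ‖P.eval ((starRingEnd ℂ) zstar)‖
        + ‖P.eval (-(starRingEnd ℂ) zstar)‖)/4 := by
      rw [hV, hquad]
      rw [norm_div]
      have t1 : ‖(4:ℂ)‖ = 4 := by norm_num
      rw [t1]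
      have htri : ‖P.eval zstar - P.eval (-zstar)
          + (starRingEnd ℂ) (P.eval ((starRingEnd ℂ) zstar))
          - (starRingEnd ℂ) (P.eval (-(starRingEnd ℂ) zstar))‖
          ≤ ‖P.eval zstar‖ + ‖P.eval (-zstar)‖
            + ‖P.eval ((starRingEnd ℂ) zstar)‖
            + ‖P.eval (-(starRingEnd ℂ) zstar)‖ := by
        calc ‖P.eval zstar - P.eval (-zstar)
            + (starRingEnd ℂ) (P.eval ((starRingEnd ℂ) zstar))
            - (starRingEnd ℂ) (P.eval (-(starRingEnd ℂ) zstar))‖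
            ≤ ‖P.eval zstar - P.eval (-zstar)
              + (starRingEnd ℂ) (P.eval ((starRingEnd ℂ) zstar))‖
              + ‖(starRingEnd ℂ) (P.eval (-(starRingEnd ℂ) zstar))‖ :=
              norm_sub_le _ _
          _ ≤ ‖P.eval zstar - P.eval (-zstar)‖
              + ‖(starRingEnd ℂ) (P.eval ((starRingEnd ℂ) zstar))‖
              + ‖(starRingEnd ℂ) (P.eval (-(starRingEnd ℂ) zstar))‖ := by
              have := norm_add_le (P.eval zstar - P.eval (-zstar))
                ((starRingEnd ℂ) (P.eval ((starRingEnd ℂ) zstar)))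
              linarith
          _ ≤ ‖P.eval zstar‖ + ‖P.eval (-zstar)‖
              + ‖(starRingEnd ℂ) (P.eval ((starRingEnd ℂ) zstar))‖
              + ‖(starRingEnd ℂ) (P.eval (-(starRingEnd ℂ) zstar))‖ := by
              have := norm_sub_le (P.eval zstar) (P.eval (-zstar))
              linarith
          _ = ‖P.eval zstar‖ + ‖P.eval (-zstar)‖
              + ‖P.eval ((starRingEnd ℂ) zstar)‖
              + ‖P.eval (-(starRingEnd ℂ) zstar)‖ := by
              rw [Complex.norm_conj, Complex.norm_conj]
      linarith
    linarith
  have hfin : supNorm S (X ^ 3 - Polynomial.C ((c:ℂ)) * X) ≤ V := by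
    apply Real.sSup_le _ hV0
    rintro y ⟨z, hzmem, rfl⟩
    show ‖(X ^ 3 - Polynomial.C ((c:ℂ)) * X : Polynomial ℂ).eval z‖ ≤ V
    rw [show (X ^ 3 - Polynomial.C ((c:ℂ)) * X : Polynomial ℂ).eval z = z^3 - (c:ℂ)*z by simp]
    exact hub z hzmem
  exact le_trans hfin hVle

set_option maxHeartbeats 1000000 in
theorem chebyshev_deg_three_lemniscate (r : ℝ) (hr : 1 ≤ r) :
    ((X ^ 3 - Polynomial.C ((chebCoeff r : ℂ)) * X : Polynomial ℂ).Monic ∧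
     (X ^ 3 - Polynomial.C ((chebCoeff r : ℂ)) * X : Polynomial ℂ).natDegree = 3 ∧
     ∀ P : Polynomial ℂ, P.Monic → P.natDegree = 3 →
       supNorm {z : ℂ | ‖z ^ 2 - 1‖ = r ^ 2}
           (X ^ 3 - Polynomial.C ((chebCoeff r : ℂ)) * X) ≤
         supNorm {z : ℂ | ‖z ^ 2 - 1‖ = r ^ 2} P) ∧
    Tendsto chebCoeff atTop (nhds (3 / 2)) := by
  obtain ⟨c, hcdef⟩ : ∃ c : ℝ, c = chebCoeff r := ⟨_, rfl⟩
  rw [← hcdef]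
  have hr4 : (1:ℝ) ≤ r^4 := by nlinarith [pow_le_pow_left₀ (by norm_num : (0:ℝ) ≤ 1) hr 4]
  have harg : (0:ℝ) ≤ 1 + 7*r^4 + r^8 := by nlinarith
  have hR0 : 0 ≤ Real.sqrt (1 + 7*r^4 + r^8) := Real.sqrt_nonneg _
  have hR2 : (Real.sqrt (1 + 7*r^4 + r^8))^2 = 1 + 7*r^4 + r^8 := Real.sq_sqrt harg
  have hc : c = (4 - r^4 + Real.sqrt (1 + 7*r^4 + r^8))/5 := by
    rw [hcdef]; unfold chebCoeff; norm_num
  have hcon : 5*c^2 - 8*c + 3 + (2*c-3)*r^4 = 0 := by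
    rw [hc]; linear_combination (1/5 : ℝ) * hR2
  have hc1 : 6/5 ≤ c := by
    rw [hc]
    have : r^4 + 2 ≤ Real.sqrt (1 + 7*r^4 + r^8) := by nlinarith
    linarith
  have hc2 : c < 3/2 := by
    rw [hc]
    have : Real.sqrt (1 + 7*r^4 + r^8) < r^4 + 7/2 := by nlinarith
    linarith
  refine ⟨⟨?_, ?_, ?_⟩, ?_⟩
  · -- Monic
    monicity!
  · -- natDegree = 3
    compute_degree!
  · -- minimality
    intro P hPmon hPdeg
    have hs1 : (1:ℝ) ≤ r^2 := by nlinarith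
    have hconu : (r^2)^2 + 2*(1-c)*(r^2)^2 - 5*(1-c)^2 + 2*(1-c) = 0 := by
      have h4 : (r^2)^2 = r^4 := by ring
      rw [h4]
      linear_combination -hcon
    exact cheb_min_core (r^2) c (1-c) hs1 rfl hc1 hc2 hconu P hPmon hPdeg
  · -- the limit
    have h1 : Tendsto (fun r : ℝ => (r^4)⁻¹) atTop (nhds 0) :=
      (tendsto_pow_atTop (by norm_num)).inv_tendsto_atTop
    have hg : ContinuousAt (fun y : ℝ => (4 + (y + 7)/(Real.sqrt (y^2 + 7*y + 1) + 1))/5) 0 := by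
      have hne : Real.sqrt (0^2 + 7*0 + 1) + 1 ≠ 0 := by simp
      fun_prop (disch := simpa using hne)
    have hcomp := (hg.tendsto.comp h1)
    norm_num [Real.sqrt_one] at hcomp
    refine hcomp.congr' ?_
    filter_upwards [eventually_ge_atTop (1:ℝ)] with ρ hρ
    have hρ4 : (0:ℝ) < ρ^4 := by positivity
    have hρ4' : (ρ:ℝ)^4 ≠ 0 := ne_of_gt hρ4
    have hY : (0:ℝ) ≤ ((ρ^4)⁻¹)^2 + 7*((ρ^4)⁻¹) + 1 := by positivity
    set T := Real.sqrt (((ρ^4)⁻¹)^2 + 7*((ρ^4)⁻¹) + 1) with hTdef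
    have hT0 : 0 ≤ T := Real.sqrt_nonneg _
    have hT2 : T^2 = ((ρ^4)⁻¹)^2 + 7*((ρ^4)⁻¹) + 1 := Real.sq_sqrt hY
    have hx : ρ^4 * (ρ^4)⁻¹ = 1 := mul_inv_cancel₀ hρ4'
    have hT2' : ρ^8 * T^2 = 1 + 7*ρ^4 + ρ^8 := by
      linear_combination ρ^8*hT2 + ((ρ^4*(ρ^4)⁻¹+1) + 7*ρ^4)*hx
    have hsq : Real.sqrt (1 + 7*ρ^4 + ρ^8) = ρ^4 * T := by
      rw [show (1 + 7*ρ^4 + ρ^8 : ℝ) = (ρ^4)^2 * (((ρ^4)⁻¹)^2 + 7*((ρ^4)⁻¹) + 1) by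
        linear_combination (-(ρ^4*(ρ^4)⁻¹+1) - 7*ρ^4)*hx]
      rw [Real.sqrt_mul (sq_nonneg _), Real.sqrt_sq hρ4.le]
    have hT1 : T + 1 ≠ 0 := by positivity
    have hkey : ((ρ^4)⁻¹+7)/(T+1) = ρ^4*T - ρ^4 := by
      rw [div_eq_iff hT1]
      refine mul_left_cancel₀ hρ4' ?_
      rw [mul_add, mul_inv_cancel₀ hρ4']
      linear_combination -hT2'
    show (4 + ((ρ^4)⁻¹ + 7)/(T + 1))/5 = chebCoeff ρ
    unfold chebCoeff
    rw [hsq]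
    rw [hkey]
    ring
end
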